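/- Let n ≥ 1 be a natural number, let m_0, ..., m_{q−1} be natural numbers with each m_j > 1, let t and s_0, ..., s_{q−1} be positive rational numbers, and let u, v be positive rational numbers. Then there exists a positive rational number x with u < x < v such that x·t is an n-th power and, for every j < q, x·s_j is not an m_j-th power, if and only if, u < v and for every j < q with m_j dividing n, t^{−1}·s_j is not an m_j-th power. -/

import Mathlib

/-!
Necessity: `x * s j = (x * t) * (t⁻¹ * s j)`, and the `n`-th power `x * t` is an `m j`-th power
when `m j ∣ n`.

Sufficiency: take a prime `p` dividing no numerator or denominator of `t` and the `s j`, and a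
rational `w` of `p`-adic valuation `1` with `u * t < w ^ n < v * t` (rationals of prescribed
valuation are dense). Then `x = w ^ n / t` works. If `m j ∣ n`, then
`x * s j = w ^ n * (t⁻¹ * s j)` is an `m j`-th power iff `t⁻¹ * s j` is. Otherwise `x * s j` has
`p`-adic valuation `n`, which `m j` does not divide.
-/

open Finset

lemma padicValNat_eq_zero_of_lt {p k : ℕ} (h : k < p) : padicValNat p k = 0 := by
  rcases k.eq_zero_or_pos with rfl | hk
  · exact padicValNat_zero_right p
  · exact padicValNat.eq_zero_of_not_dvd (Nat.not_dvd_of_pos_of_lt hk h)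

lemma padicValRat_eq_zero_of_lt {p : ℕ} {x : ℚ} (hnum : x.num.natAbs < p) (hden : x.den < p) :
    padicValRat p x = 0 := by
  rw [padicValRat_def, padicValInt, padicValNat_eq_zero_of_lt hnum,
    padicValNat_eq_zero_of_lt hden]
  rfl

lemma exists_prime_forall_padicValRat_eq_zero (S : Finset ℚ) :
    ∃ p : ℕ, p.Prime ∧ ∀ x ∈ S, padicValRat p x = 0 := by
  obtain ⟨p, hle, hp⟩ := Nat.exists_infinite_primes (S.sup fun x => x.num.natAbs ⊔ x.den).succ
  refine ⟨p, hp, fun x hx => ?_⟩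
  have hx := le_sup (f := fun x : ℚ => x.num.natAbs ⊔ x.den) hx
  simp only [sup_le_iff] at hx
  exact padicValRat_eq_zero_of_lt (by omega) (by omega)

lemma exists_int_btwn_not_dvd {K : Type*} [CommRing K] [LinearOrder K] [IsStrictOrderedRing K]
    [FloorRing K] {p : ℤ} (hp : ¬IsUnit p) (y : K) :
    ∃ a : ℤ, y < a ∧ (a : K) ≤ y + 2 ∧ ¬p ∣ a := by
  have hlo := Int.lt_floor_add_one y
  have hhi := Int.floor_le y
  by_cases h : p ∣ ⌊y⌋ + 1
  · refine ⟨⌊y⌋ + 2, by push_cast; linarith, by push_cast; linarith, fun h' => hp ?_⟩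
    exact isUnit_of_dvd_one (by simpa using dvd_sub h' h)
  · exact ⟨⌊y⌋ + 1, by exact_mod_cast hlo, by push_cast; linarith, h⟩

lemma exists_padicValRat_eq_zero_btwn {p : ℕ} (hp : p.Prime) {α β : ℚ} (h : α < β) :
    ∃ r : ℚ, r ≠ 0 ∧ padicValRat p r = 0 ∧ α < r ∧ r < β := by
  have hp' : ¬IsUnit (p : ℤ) := (Nat.prime_iff_prime_int.mp hp).not_isUnit
  have hβα : 0 < β - α := sub_pos.mpr h
  obtain ⟨d, hd, -, hpd⟩ := exists_int_btwn_not_dvd hp' (2 / (β - α))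
  have hd0 : (0 : ℚ) < d := lt_trans (by positivity) hd
  have hgap : 2 < (β - α) * d := by rwa [div_lt_iff₀' hβα] at hd
  obtain ⟨a, ha, ha', hpa⟩ := exists_int_btwn_not_dvd hp' (α * d)
  have ha0 : a ≠ 0 := by rintro rfl; exact hpa (dvd_zero _)
  have := Fact.mk hp
  refine ⟨a / d, by simp [ha0, hd0.ne'], ?_, (lt_div_iff₀ hd0).mpr ha,
    (div_lt_iff₀ hd0).mpr (by linarith)⟩
  rw [padicValRat.div (by exact_mod_cast ha0) hd0.ne', padicValRat.of_int, padicValRat.of_int,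
    padicValInt.eq_zero_of_not_dvd hpa, padicValInt.eq_zero_of_not_dvd hpd, Nat.cast_zero, sub_zero]

lemma exists_padicValRat_eq_btwn {p : ℕ} (hp : p.Prime) (k : ℤ) {α β : ℚ} (h : α < β) :
    ∃ w : ℚ, padicValRat p w = k ∧ α < w ∧ w < β := by
  have hpk : (0 : ℚ) < (p : ℚ) ^ k := zpow_pos (by exact_mod_cast hp.pos) k
  obtain ⟨r, hr, hr0, hlo, hhi⟩ :=
    exists_padicValRat_eq_zero_btwn hp (div_lt_div_of_pos_right h hpk)
  have := Fact.mk hp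
  refine ⟨p ^ k * r, ?_, (div_lt_iff₀' hpk).mp hlo, (lt_div_iff₀' hpk).mp hhi⟩
  rw [padicValRat.mul hpk.ne' hr, padicValRat.zpow, padicValRat.self hp.one_lt, hr0]
  ring

lemma exists_pow_btwn_padicValRat_eq {p : ℕ} (hp : p.Prime) (k : ℤ) {n : ℕ} (hn : n ≠ 0)
    {a b : ℚ} (hab : a < b) (hb : 0 < b) :
    ∃ w : ℚ, 0 < w ∧ padicValRat p w = k ∧ a < w ^ n ∧ w ^ n < b := by
  obtain ⟨q₂, hq₂, haq₂, hq₂b⟩ := exists_pow_btwn hn hab hb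
  obtain ⟨q₁, hq₁, haq₁, hq₁₂⟩ := exists_pow_btwn hn haq₂ (pow_pos hq₂ n)
  obtain ⟨w, hwk, hq₁w, hwq₂⟩ :=
    exists_padicValRat_eq_btwn hp k ((pow_lt_pow_iff_left₀ hq₁.le hq₂.le hn).mp hq₁₂)
  have hw : 0 < w := hq₁.trans hq₁w
  exact ⟨w, hw, hwk, haq₁.trans (pow_lt_pow_left₀ hq₁w hq₁.le hn),
    (pow_lt_pow_left₀ hwq₂ hw.le hn).trans hq₂b⟩

lemma exists_pow_mul_of_dvd {M : Type*} [CommMonoid M] {m n : ℕ} (hmn : m ∣ n) (w : M) {b : M}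
    (hb : ∃ y, b = y ^ m) : ∃ y, w ^ n * b = y ^ m := by
  obtain ⟨k, rfl⟩ := hmn
  obtain ⟨y, rfl⟩ := hb
  exact ⟨w ^ k * y, by rw [mul_pow, ← pow_mul, mul_comm k]⟩

lemma exists_pow_of_exists_pow_mul {G : Type*} [CommGroupWithZero G] {m n : ℕ} (hmn : m ∣ n)
    {w b : G} (hw : w ≠ 0) (h : ∃ y, w ^ n * b = y ^ m) : ∃ y, b = y ^ m := by
  obtain ⟨k, rfl⟩ := hmn
  obtain ⟨y, hy⟩ := h
  refine ⟨y / w ^ k, ?_⟩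
  rw [div_pow, ← hy, ← pow_mul, mul_comm k, mul_div_cancel_left₀ _ (pow_ne_zero _ hw)]

theorem qe_bounded_general (n : ℕ) (hn : 1 ≤ n) (q : ℕ) (m : Fin q → ℕ)
    (t : ℚ) (ht : 0 < t) (s : Fin q → ℚ) (hs : ∀ j, 0 < s j)
    (u v : ℚ) (hv : 0 < v) :
    (∃ x : ℚ, 0 < x ∧ u < x ∧ x < v ∧ (∃ w : ℚ, x * t = w ^ n) ∧
        ∀ j, ¬ ∃ w : ℚ, x * s j = w ^ m j) ↔
      (u < v ∧ ∀ j, m j ∣ n → ¬ ∃ w : ℚ, t⁻¹ * s j = w ^ m j) := by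
  constructor
  · rintro ⟨x, hx, hux, hxv, ⟨w, hw⟩, hxs⟩
    refine ⟨hux.trans hxv, fun j hdvd hst => hxs j ?_⟩
    have hsplit : x * s j = (x * t) * (t⁻¹ * s j) := by field_simp
    rw [hsplit, hw]
    exact exists_pow_mul_of_dvd hdvd w hst
  · rintro ⟨huv, hst⟩
    obtain ⟨p, hp, hval⟩ := exists_prime_forall_padicValRat_eq_zero (insert t (univ.image s))
    have := Fact.mk hp
    have hpt : padicValRat p t = 0 := hval t (mem_insert_self _ _)
    have hps (j : Fin q) : padicValRat p (s j) = 0 :=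
      hval (s j) (mem_insert_of_mem (mem_image_of_mem s (mem_univ j)))
    obtain ⟨w, hw, hw1, hlo, hhi⟩ := exists_pow_btwn_padicValRat_eq hp 1
      (Nat.one_le_iff_ne_zero.mp hn) (mul_lt_mul_of_pos_right huv ht) (mul_pos hv ht)
    refine ⟨w ^ n / t, by positivity, (lt_div_iff₀ ht).mpr hlo, (div_lt_iff₀ ht).mpr hhi,
      ⟨w, div_mul_cancel₀ _ ht.ne'⟩, fun j => ?_⟩
    have hsj := hs j
    have hsplit : w ^ n / t * s j = w ^ n * (t⁻¹ * s j) := by ring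
    rw [hsplit]
    by_cases hdvd : m j ∣ n
    · exact fun h => hst j hdvd (exists_pow_of_exists_pow_mul hdvd hw.ne' h)
    rintro ⟨y, hy⟩
    have hvaln : padicValRat p (w ^ n * (t⁻¹ * s j)) = n := by
      rw [padicValRat.mul (by positivity) (by positivity), padicValRat.pow,
        padicValRat.mul (by positivity) hsj.ne', padicValRat.inv, hw1, hpt, hps j]
      ring
    exact hdvd <| Int.natCast_dvd_natCast.mp
      ⟨padicValRat p y, by rw [← hvaln, hy, padicValRat.pow]⟩

/-- Quantifier-elimination lemma for `⟨ℚ⁺; <, ×⟩`: bounded case. -/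
theorem qe_bounded (n : ℕ) (hn : 1 ≤ n) (q : ℕ) (m : Fin q → ℕ) (hm : ∀ j, 1 < m j)
    (t : ℚ) (ht : 0 < t) (s : Fin q → ℚ) (hs : ∀ j, 0 < s j)
    (u v : ℚ) (hu : 0 < u) (hv : 0 < v) :
    (∃ x : ℚ, 0 < x ∧ u < x ∧ x < v ∧ (∃ w : ℚ, x * t = w ^ n) ∧
        ∀ j, ¬ ∃ w : ℚ, x * s j = w ^ m j) ↔
      (u < v ∧ ∀ j, m j ∣ n → ¬ ∃ w : ℚ, t⁻¹ * s j = w ^ m j) :=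
  qe_bounded_general n hn q m t ht s hs u v hv
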